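/- For all n ≥ 0, w_{n+1} = (w_{n-1} v_{n-2})^{d_{n+1}} w_{n-1}. -/

import Mathlib

/-!
Write `cₙ` for the last letter of `sₙ` (`b` for odd `n`, `a` for even `n`) and `sₙ = s'ₙ cₙ`.
The letter prepended to `wₙ₋₁` and to `wₙ₊₁` is `cₙ`, and the one prepended to `vₙ₋₂` is `cₙ₋₁`.
Hence `wₙ₋₁ vₙ₋₂ = cₙ s'ₙ₋₁ cₙ₋₁ (sₙ₋₁^(dₙ - 1) sₙ₋₂)' = cₙ (sₙ₋₁^(dₙ) sₙ₋₂)' = cₙ s'ₙ` is the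
cyclic shift of `sₙ` that brings its last letter to the front, and
`wₙ₊₁ = cₙ (s'ₙ cₙ)^(dₙ₊₁) s'ₙ₋₁ = (cₙ s'ₙ)^(dₙ₊₁) cₙ s'ₙ₋₁ = (wₙ₋₁ vₙ₋₂)^(dₙ₊₁) wₙ₋₁`.
-/

/-- Letters: `a` is `false`, `b` is `true`. -/
abbrev Word := List Bool

/-- `wpow w k` is the `k`-fold concatenation `w^k`. -/
def wpow (w : Word) (k : ℕ) : Word := (List.replicate k w).flatten

lemma wpow_succ (w : Word) (k : ℕ) : wpow w (k + 1) = w ++ wpow w k := by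
  simp [wpow, List.replicate_succ]

lemma append_wpow_pred (w : Word) {k : ℕ} (hk : 1 ≤ k) : w ++ wpow w (k - 1) = wpow w k := by
  rw [← wpow_succ, Nat.sub_add_cancel hk]

lemma append_wpow_append (x u : Word) (k : ℕ) :
    x ++ wpow (u ++ x) k = wpow (x ++ u) k ++ x := by
  induction k with
  | zero => simp [wpow]
  | succ k ih => simp only [wpow_succ, List.append_assoc, ih]

lemma ite_odd_eq_singleton (n : ℤ) :
    (if Odd n then [false] else [true] : Word) = [decide (Even n)] := by
  by_cases h : Even n <;> simp [h]

section StandardSequence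

variable {d : ℤ → ℕ} {s : ℤ → Word}

lemma getLast?_standard (hs1 : s (-1) = [true]) (hs0 : s 0 = [false])
    (hs : ∀ n : ℤ, 1 ≤ n → s n = wpow (s (n - 1)) (d n) ++ s (n - 2)) :
    ∀ n : ℤ, -1 ≤ n → (s n).getLast? = some (decide (Odd n)) := by
  suffices h : ∀ n : ℤ, -1 ≤ n →
      (s n).getLast? = some (decide (Odd n)) ∧ (s (n + 1)).getLast? = some (decide (Odd (n + 1))) from
    fun n hn => (h n hn).1
  intro n hn
  induction n, hn using Int.leInduction with
  | base => simp [hs1, hs0]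
  | succ n hn ih =>
    refine ⟨ih.2, ?_⟩
    have hsucc := hs (n + 1 + 1) (by omega)
    rw [show n + 1 + 1 - 2 = n by ring] at hsucc
    rw [hsucc, List.getLast?_append, ih.1]
    simp [parity_simps]

lemma dropLast_append_last_standard (hs1 : s (-1) = [true]) (hs0 : s 0 = [false])
    (hs : ∀ n : ℤ, 1 ≤ n → s n = wpow (s (n - 1)) (d n) ++ s (n - 2))
    {n : ℤ} (hn : -1 ≤ n) : (s n).dropLast ++ [decide (Odd n)] = s n :=
  List.dropLast_append_getLast? _ (getLast?_standard hs1 hs0 hs n hn)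

lemma standard_ne_nil (hs1 : s (-1) = [true]) (hs0 : s 0 = [false])
    (hs : ∀ n : ℤ, 1 ≤ n → s n = wpow (s (n - 1)) (d n) ++ s (n - 2))
    {n : ℤ} (hn : -1 ≤ n) : s n ≠ [] := by
  intro h
  simpa [h] using getLast?_standard hs1 hs0 hs n hn

lemma dropLast_standard (hs1 : s (-1) = [true]) (hs0 : s 0 = [false])
    (hs : ∀ n : ℤ, 1 ≤ n → s n = wpow (s (n - 1)) (d n) ++ s (n - 2))
    {n : ℤ} (hn : 1 ≤ n) : (s n).dropLast = wpow (s (n - 1)) (d n) ++ (s (n - 2)).dropLast := by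
  rw [hs n hn, List.dropLast_append_of_ne_nil (standard_ne_nil hs1 hs0 hs (by omega))]

variable {w v : ℤ → Word}

lemma singular_sub_one (hs1 : s (-1) = [true])
    (hw : ∀ n : ℤ, 0 ≤ n → w n = (if Odd n then [false] else [true]) ++ (s n).dropLast)
    (hwm1 : w (-1) = [false]) {n : ℤ} (hn : 0 ≤ n) :
    w (n - 1) = [decide (Odd n)] ++ (s (n - 1)).dropLast := by
  obtain rfl | hn : n = 0 ∨ 1 ≤ n := by omega
  · simp [hwm1, hs1]
  · rw [hw (n - 1) (by omega), ite_odd_eq_singleton]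
    simp

lemma singular_sub_one_append_adjoining_sub_two (hd : ∀ n : ℤ, 1 ≤ n → 1 ≤ d n)
    (hs1 : s (-1) = [true]) (hs0 : s 0 = [false])
    (hs : ∀ n : ℤ, 1 ≤ n → s n = wpow (s (n - 1)) (d n) ++ s (n - 2))
    (hw : ∀ n : ℤ, 0 ≤ n → w n = (if Odd n then [false] else [true]) ++ (s n).dropLast)
    (hwm1 : w (-1) = [false])
    (hv : ∀ n : ℤ, -1 ≤ n → v n = (if Odd n then [false] else [true]) ++ (wpow (s (n + 1)) (d (n + 2) - 1) ++ s n).dropLast)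
    (hvm2 : v (-2) = []) {n : ℤ} (hn : 0 ≤ n) :
    w (n - 1) ++ v (n - 2) = [decide (Odd n)] ++ (s n).dropLast := by
  obtain rfl | hn : n = 0 ∨ 1 ≤ n := by omega
  · simp [hwm1, hvm2, hs0]
  have hv' := hv (n - 2) (by omega)
  rw [show n - 2 + 1 = n - 1 by ring, show n - 2 + 2 = n by ring, ite_odd_eq_singleton,
    show decide (Even (n - 2)) = decide (Odd (n - 1)) by simp [parity_simps]] at hv'
  have hlast := dropLast_append_last_standard hs1 hs0 hs (n := n - 1) (by omega)
  have hne := standard_ne_nil hs1 hs0 hs (n := n - 2) (by omega)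
  calc w (n - 1) ++ v (n - 2)
      = [decide (Odd n)] ++ (((s (n - 1)).dropLast ++ [decide (Odd (n - 1))]) ++
          (wpow (s (n - 1)) (d n - 1) ++ s (n - 2)).dropLast) := by
        rw [singular_sub_one hs1 hw hwm1 (by omega), hv']
        simp only [List.append_assoc]
    _ = [decide (Odd n)] ++ (s (n - 1) ++ wpow (s (n - 1)) (d n - 1) ++ (s (n - 2)).dropLast) := by
        rw [hlast, List.dropLast_append_of_ne_nil hne]
        simp only [List.append_assoc]
    _ = [decide (Odd n)] ++ (s n).dropLast := by
        rw [append_wpow_pred _ (hd n hn), dropLast_standard hs1 hs0 hs hn]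

end StandardSequence

theorem singular_word_power_formula_general (d : ℤ → ℕ) (s : ℤ → Word)
    (hd : ∀ n : ℤ, 1 ≤ n → 1 ≤ d n)
    (hs1 : s (-1) = [true]) (hs0 : s 0 = [false])
    (hs : ∀ n : ℤ, 1 ≤ n → s n = wpow (s (n - 1)) (d n) ++ s (n - 2))
    (w : ℤ → Word)
    (hw : ∀ n : ℤ, 0 ≤ n → w n = (if Odd n then [false] else [true]) ++ (s n).dropLast)
    (hwm1 : w (-1) = [false])
    (v : ℤ → Word)
    (hv : ∀ n : ℤ, -1 ≤ n → v n = (if Odd n then [false] else [true]) ++ (wpow (s (n + 1)) (d (n + 2) - 1) ++ s n).dropLast)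
    (hvm2 : v (-2) = []) :
    ∀ n : ℤ, 0 ≤ n →
      w (n + 1) = wpow (w (n - 1) ++ v (n - 2)) (d (n + 1)) ++ w (n - 1) := by
  intro n hn
  have hsucc := dropLast_standard hs1 hs0 hs (n := n + 1) (by omega)
  rw [show n + 1 - 1 = n by ring, show n + 1 - 2 = n - 1 by ring] at hsucc
  calc w (n + 1)
      = [decide (Odd n)] ++ wpow ((s n).dropLast ++ [decide (Odd n)]) (d (n + 1)) ++
          (s (n - 1)).dropLast := by
        rw [hw (n + 1) (by omega), ite_odd_eq_singleton, hsucc,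
          dropLast_append_last_standard hs1 hs0 hs (by omega)]
        simp [parity_simps]
    _ = wpow ([decide (Odd n)] ++ (s n).dropLast) (d (n + 1)) ++
          ([decide (Odd n)] ++ (s (n - 1)).dropLast) := by
        rw [append_wpow_append, List.append_assoc]
    _ = wpow (w (n - 1) ++ v (n - 2)) (d (n + 1)) ++ w (n - 1) := by
        rw [singular_sub_one_append_adjoining_sub_two hd hs1 hs0 hs hw hwm1 hv hvm2 hn,
          singular_sub_one hs1 hw hwm1 hn]

/-- For all `n ≥ 0`, `wₙ₊₁ = (wₙ₋₁ vₙ₋₂)^(dₙ₊₁) wₙ₋₁`. -/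
theorem singular_word_power_formula (d : ℤ → ℕ) (s : ℤ → Word)
    (hd : ∀ n : ℤ, 1 ≤ n → 1 ≤ d n)
    (hs1 : s (-1) = [true]) (hs0 : s 0 = [false])
    (hs : ∀ n : ℤ, 1 ≤ n → s n = wpow (s (n - 1)) (d n) ++ s (n - 2))
    (w : ℤ → Word)
    (hw : ∀ n : ℤ, 0 ≤ n → w n = (if Odd n then [false] else [true]) ++ (s n).dropLast)
    (hwm1 : w (-1) = [false]) (hwm2 : w (-2) = [])
    (v : ℤ → Word)
    (hv : ∀ n : ℤ, -1 ≤ n → v n = (if Odd n then [false] else [true]) ++ (wpow (s (n + 1)) (d (n + 2) - 1) ++ s n).dropLast)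
    (hvm2 : v (-2) = []) :
    ∀ n : ℤ, 0 ≤ n →
      w (n + 1) = wpow (w (n - 1) ++ v (n - 2)) (d (n + 1)) ++ w (n - 1) :=
  singular_word_power_formula_general d s hd hs1 hs0 hs w hw hwm1 v hv hvm2
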